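/- arXiv:1606.07516 — 2 statements merged into one kernel-verified Lean document; each statement's English description precedes it below -/
import Mathlib

section
/- Ring protocol R1 is not correct under push-pull: after the call sequence (1,2), (2,3), ..., (n−1,n) on a directed ring of n ≥ 3 agents starting from the initial situation, agent 1 is familiar only with secrets A₁ and A₂ and is hence not an expert, even though each agent i < n is familiar with exactly the secrets of agents 1,...,i+1. -/
/-! Each call `(m, m + 1)` of the chain hands everything known so far to agent `m + 1`, and
agent `m` never calls again, so its knowledge freezes at the secrets `0, …, m + 1`.
In particular agent `0` is left with `{0, 1}`. -/

/-- The effect of a push-pull call `(a,b)`: both agents learn the union of their secrets.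
Agents `1,…,n` are coded as `0,…,n-1`; agent `x`'s secret is `x`. -/
def pushPullCall (c : ℕ × ℕ) (s : ℕ → Finset ℕ) : ℕ → Finset ℕ :=
  fun x => if x = c.1 ∨ x = c.2 then s c.1 ∪ s c.2 else s x

/-- Applying a finite list of push-pull calls, in order, to a gossip situation. -/
def runCalls (cs : List (ℕ × ℕ)) (s : ℕ → Finset ℕ) : ℕ → Finset ℕ :=
  cs.foldl (fun t c => pushPullCall c t) s

/-- The call sequence `(1,2), (2,3), …, (n−1,n)` along the ring, in 0-indexed coding. -/
def chainSeq (n : ℕ) : List (ℕ × ℕ) :=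
  (List.range (n - 1)).map fun k => (k, k + 1)

def chainState (m : ℕ) (x : ℕ) : Finset ℕ :=
  if x < m then Finset.range (x + 2) else if x = m then Finset.range (m + 1) else {x}

lemma runCalls_append_singleton (cs : List (ℕ × ℕ)) (c : ℕ × ℕ) (s : ℕ → Finset ℕ) :
    runCalls (cs ++ [c]) s = pushPullCall c (runCalls cs s) := by
  simp only [runCalls, List.foldl_append, List.foldl_cons, List.foldl_nil]

lemma pushPullCall_chainState (m : ℕ) :
    pushPullCall (m, m + 1) (chainState m) = chainState (m + 1) := by
  funext x
  have hunion : Finset.range (m + 1) ∪ {m + 1} = Finset.range (m + 2) := by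
    rw [Finset.range_add_one (n := m + 1), Finset.insert_eq, Finset.union_comm]
  simp only [pushPullCall, chainState]
  split_ifs <;> first | rfl | omega | (rw [hunion]; congr 1; omega)

lemma runCalls_chain (m : ℕ) :
    runCalls ((List.range m).map fun k => (k, k + 1)) (fun x => {x}) = chainState m := by
  induction m with
  | zero => funext x; simp [runCalls, chainState]
  | succ m ih =>
    rw [List.range_succ, List.map_append, List.map_singleton, runCalls_append_singleton, ih,
      pushPullCall_chainState]

/-- After the push-pull call sequence `(1,2), (2,3), …, (n−1,n)` on a directed ring of
`n ≥ 3` agents starting from the initial situation, each agent `i < n` is familiar with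
exactly the secrets of agents `1,…,i+1` (the last agent with all secrets), and agent `1`
(coded `0`) is familiar only with the secrets of agents `1` and `2`, hence is not an
expert. Consequently ring protocol R1 is not correct under push-pull. -/
theorem R1_pushpull_incorrect_computation (n : ℕ) (hn : 3 ≤ n) :
    (∀ i : ℕ, i + 1 < n →
        runCalls (chainSeq n) (fun x => ({x} : Finset ℕ)) i = Finset.range (i + 2)) ∧
    runCalls (chainSeq n) (fun x => ({x} : Finset ℕ)) (n - 1) = Finset.range n ∧
    runCalls (chainSeq n) (fun x => ({x} : Finset ℕ)) 0 = ({0, 1} : Finset ℕ) ∧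
    runCalls (chainSeq n) (fun x => ({x} : Finset ℕ)) 0 ≠ Finset.range n := by
  rw [chainSeq, runCalls_chain]
  have hfirst : chainState (n - 1) 0 = {0, 1} := by
    rw [chainState, if_pos (by omega)]; rfl
  refine ⟨fun i hi => if_pos (by omega), ?_, hfirst, ?_⟩
  · rw [chainState, if_neg (by omega), if_pos rfl, Nat.sub_add_cancel (by omega)]
  · rw [hfirst]
    intro h
    have h2 : 2 ∈ Finset.range n := Finset.mem_range.mpr hn
    simp [← h] at h2
end

section
/- After the push-pull call sequence (1,2), (2,3), ..., (n−1,n), (n,1), (1,2) on a directed ring of n ≥ 5 agents, agent 3 is not familiar with the secret of agent 5; hence protocol R2 is not correct for n ≥ 5. -/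
/-- The call sequence `(1,2), (2,3), …, (n−1,n), (n,1), (1,2)` in 0-indexed coding. -/
def R2Seq (n : ℕ) : List (ℕ × ℕ) :=
  ((List.range (n - 1)).map fun k => (k, k + 1)) ++ [(n - 1, 0), (0, 1)]

/-
Agent 3 takes part only in the calls (1,2) and (2,3), both made before agent 5 has been
called by anyone; after them it knows the secrets of agents 1–4 and never learns more.
-/

lemma runCalls_append (cs ds : List (ℕ × ℕ)) (s : ℕ → Finset ℕ) :
    runCalls (cs ++ ds) s = runCalls ds (runCalls cs s) :=
  List.foldl_append ..

lemma pushPullCall_apply_of_ne {c : ℕ × ℕ} {a : ℕ} (h₁ : c.1 ≠ a) (h₂ : c.2 ≠ a)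
    (s : ℕ → Finset ℕ) : pushPullCall c s a = s a := by
  simp [pushPullCall, h₁.symm, h₂.symm]

lemma runCalls_apply_of_forall_ne {cs : List (ℕ × ℕ)} {a : ℕ}
    (h : ∀ c ∈ cs, c.1 ≠ a ∧ c.2 ≠ a) (s : ℕ → Finset ℕ) : runCalls cs s a = s a := by
  induction cs generalizing s with
  | nil => rfl
  | cons c cs ih =>
    obtain ⟨h₁, h₂⟩ := h c List.mem_cons_self
    rw [← List.singleton_append, runCalls_append,
      ih (fun d hd => h d (List.mem_cons_of_mem _ hd))]
    exact pushPullCall_apply_of_ne h₁ h₂ s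

lemma R2Seq_add_four (m : ℕ) :
    R2Seq (m + 4) = [(0, 1), (1, 2), (2, 3)] ++
      (((List.range m).map fun k => (k + 3, k + 4)) ++ [(m + 3, 0), (0, 1)]) := by
  rw [R2Seq, show m + 4 - 1 = 3 + m by omega, List.range_add, List.map_append,
    List.map_map, List.append_assoc]
  congr 2
  · exact List.map_congr_left fun k _ => by ext <;> simp <;> omega
  · rw [Nat.add_comm]

/-- After the push-pull call sequence `(1,2), (2,3), …, (n−1,n), (n,1), (1,2)` on a
directed ring of `n ≥ 5` agents (starting from the initial situation), agent `3`
(coded `2`) is not familiar with the secret of agent `5` (coded `4`); hence ring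
protocol R2 is not correct for `n ≥ 5`. -/
theorem R2_incorrect_for_five_or_more (n : ℕ) (hn : 5 ≤ n) :
    (4 : ℕ) ∉ runCalls (R2Seq n) (fun x => ({x} : Finset ℕ)) 2 := by
  obtain ⟨m, rfl⟩ : ∃ m, n = m + 4 := ⟨n - 4, by omega⟩
  have agent3_idle : ∀ c ∈ ((List.range m).map fun k => (k + 3, k + 4)) ++
      [(m + 3, 0), (0, 1)], c.1 ≠ 2 ∧ c.2 ≠ 2 := by
    intro c hc
    simp only [List.mem_append, List.mem_map, List.mem_cons, List.not_mem_nil,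
      or_false] at hc
    rcases hc with ⟨k, -, rfl⟩ | rfl | rfl <;> constructor <;> simp
  rw [R2Seq_add_four, runCalls_append, runCalls_apply_of_forall_ne agent3_idle]
  decide
end
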